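/- Let b > 0, let Q : (0,b) → Matrix(2,2,ℂ) have real entries with Q₁₂ = Q₂₁, let z ∈ ℂ with Im z ≠ 0, and let Θ, Φ : (0,b) → ℂ² be differentiable solutions of (1/i)σ₂u' + Qu = zu. Let M ∈ ℂ and set Ψ = Θ + M·Φ. Assume: (i) the function x ↦ |Ψ₁(x)|² + |Ψ₂(x)|² is Lebesgue integrable on (0,b); (ii) as x → 0⁺, W_x(Θ̄,Θ) → 0, W_x(Φ̄,Φ) → 0, W_x(Θ̄,Φ) → 1 and W_x(Φ̄,Θ) → −1, where bars denote componentwise complex conjugates; (iii) W_x(Ψ̄,Ψ) → 0 as x → b⁻. Then Im M = Im z · ∫_0^b (|Ψ₁(x)|² + |Ψ₂(x)|²) dx. In particular, Im z > 0 implies Im M ≥ 0. -/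

import Mathlib

/-!
Green's identity for the Dirac system: for real symmetric `Q`, the Wronskian `W(Ψ̄, Ψ)` of a
solution has derivative `(z̄ - z)|Ψ|²`. Integrating over `(0, b)` and using the boundary limits,
`W(Ψ̄, Ψ) → 0` at `b` while the normalisation of `Θ, Φ` gives `W(Ψ̄, Ψ) → M - M̄` at `0`, so
`(z̄ - z) ∫|Ψ|² = M̄ - M`; taking imaginary parts yields `Im M = Im z ∫|Ψ|²`.
-/

open MeasureTheory Set

noncomputable section

/-- The Pauli matrix `σ₂` (as a complex matrix). -/
def sig2C : Matrix (Fin 2) (Fin 2) ℂ := !![0, -Complex.I; Complex.I, 0]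

/-- The Wronskian `W_x(f,g) = f₁(x)g₂(x) - f₂(x)g₁(x)`. -/
def Wx (f g : ℝ → Fin 2 → ℂ) (x : ℝ) : ℂ := f x 0 * g x 1 - f x 1 * g x 0

open Filter Topology ComplexConjugate

section DiracSystem

variable {Q : Matrix (Fin 2) (Fin 2) ℂ} {z : ℂ}

lemma dirac_eq_add_smul {u v u' v' : Fin 2 → ℂ} (M : ℂ)
    (hu : Complex.I⁻¹ • sig2C.mulVec u' + Q.mulVec u = z • u)
    (hv : Complex.I⁻¹ • sig2C.mulVec v' + Q.mulVec v = z • v) :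
    Complex.I⁻¹ • sig2C.mulVec (u' + M • v') + Q.mulVec (u + M • v) = z • (u + M • v) := by
  simp only [Matrix.mulVec_add, Matrix.mulVec_smul, smul_add, smul_comm _ M]
  rw [← hu, ← hv, smul_add]
  abel

lemma inv_I_smul_sig2C_mulVec (v : Fin 2 → ℂ) :
    Complex.I⁻¹ • sig2C.mulVec v = ![-v 1, v 0] := by
  ext i
  fin_cases i <;> simp [sig2C, Complex.inv_I, ← mul_assoc, Matrix.vecHead, Matrix.vecTail]

lemma dirac_eq_components {u u' : Fin 2 → ℂ}
    (h : Complex.I⁻¹ • sig2C.mulVec u' + Q.mulVec u = z • u) :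
    u' 0 = z * u 1 - Q 1 0 * u 0 - Q 1 1 * u 1 ∧
      u' 1 = Q 0 0 * u 0 + Q 0 1 * u 1 - z * u 0 := by
  rw [inv_I_smul_sig2C_mulVec, Matrix.mulVec_fin_two] at h
  have h0 := congrFun h 0
  have h1 := congrFun h 1
  simp only [Pi.add_apply, Pi.smul_apply, smul_eq_mul, Matrix.cons_val_zero, Matrix.cons_val_one,
    Matrix.cons_val_fin_one] at h0 h1
  constructor
  · linear_combination h1
  · linear_combination -h0

/-- Lagrange's identity: for real symmetric `Q` the potential term cancels. -/
lemma lagrange_identity_dirac (hQreal : ∀ i j, (Q i j).im = 0) (hQsym : Q 0 1 = Q 1 0)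
    {u u' : Fin 2 → ℂ} (h : Complex.I⁻¹ • sig2C.mulVec u' + Q.mulVec u = z • u) :
    conj (u' 0) * u 1 + conj (u 0) * u' 1 - (conj (u' 1) * u 0 + conj (u 1) * u' 0) =
      (conj z - z) * ((Complex.normSq (u 0) + Complex.normSq (u 1) : ℝ) : ℂ) := by
  have hconj : ∀ i j, conj (Q i j) = Q i j := fun i j => Complex.conj_eq_iff_im.mpr (hQreal i j)
  obtain ⟨h0, h1⟩ := dirac_eq_components h
  rw [h0, h1]
  push_cast
  rw [Complex.normSq_eq_conj_mul_self, Complex.normSq_eq_conj_mul_self]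
  simp only [map_sub, map_add, map_mul, hconj, hQsym]
  ring

lemma hasDerivAt_wronskian_conj {u : ℝ → Fin 2 → ℂ} {u' : Fin 2 → ℂ} {x : ℝ}
    (hu : HasDerivAt u u' x) :
    HasDerivAt (Wx (fun t i => conj (u t i)) u)
      (conj (u' 0) * u x 1 + conj (u x 0) * u' 1 - (conj (u' 1) * u x 0 + conj (u x 1) * u' 0))
      x := by
  have hu0 : HasDerivAt (fun t => u t 0) (u' 0) x := hasDerivAt_pi.mp hu 0
  have hu1 : HasDerivAt (fun t => u t 1) (u' 1) x := hasDerivAt_pi.mp hu 1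
  exact (hu0.star.mul hu1).sub (hu1.star.mul hu0)

lemma hasDerivAt_wronskian_conj_of_dirac (hQreal : ∀ i j, (Q i j).im = 0) (hQsym : Q 0 1 = Q 1 0)
    {u : ℝ → Fin 2 → ℂ} {u' : Fin 2 → ℂ} {x : ℝ} (hu : HasDerivAt u u' x)
    (h : Complex.I⁻¹ • sig2C.mulVec u' + Q.mulVec (u x) = z • u x) :
    HasDerivAt (Wx (fun t i => conj (u t i)) u)
      ((conj z - z) * ((Complex.normSq (u x 0) + Complex.normSq (u x 1) : ℝ) : ℂ)) x :=
  (hasDerivAt_wronskian_conj hu).congr_deriv (lagrange_identity_dirac hQreal hQsym h)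

end DiracSystem

lemma wronskian_conj_add_smul (Θ Φ : ℝ → Fin 2 → ℂ) (M : ℂ) (x : ℝ) :
    Wx (fun t i => conj ((Θ t + M • Φ t) i)) (fun t => Θ t + M • Φ t) x =
      Wx (fun t i => conj (Θ t i)) Θ x + M * Wx (fun t i => conj (Θ t i)) Φ x +
        conj M * Wx (fun t i => conj (Φ t i)) Θ x +
        conj M * M * Wx (fun t i => conj (Φ t i)) Φ x := by
  simp only [Wx, Pi.add_apply, Pi.smul_apply, smul_eq_mul, map_add, map_mul]
  ring

lemma tendsto_wronskian_conj_add_smul {l : Filter ℝ} {Θ Φ Ψ : ℝ → Fin 2 → ℂ} {M : ℂ}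
    (hΨ : ∀ᶠ x in l, Ψ x = Θ x + M • Φ x)
    (hΘΘ : Tendsto (Wx (fun t i => conj (Θ t i)) Θ) l (𝓝 0))
    (hΦΦ : Tendsto (Wx (fun t i => conj (Φ t i)) Φ) l (𝓝 0))
    (hΘΦ : Tendsto (Wx (fun t i => conj (Θ t i)) Φ) l (𝓝 1))
    (hΦΘ : Tendsto (Wx (fun t i => conj (Φ t i)) Θ) l (𝓝 (-1))) :
    Tendsto (Wx (fun t i => conj (Ψ t i)) Ψ) l (𝓝 (M - conj M)) := by
  have hlim := ((hΘΘ.add (hΘΦ.const_mul M)).add (hΦΘ.const_mul (conj M))).add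
    (hΦΦ.const_mul (conj M * M))
  rw [show (0 : ℂ) + M * 1 + conj M * -1 + conj M * M * 0 = M - conj M by ring] at hlim
  refine hlim.congr' ?_
  filter_upwards [hΨ] with x hx
  rw [← wronskian_conj_add_smul]
  simp only [Wx, hx]

lemma im_eq_mul_of_conj_sub_mul_ofReal {z M : ℂ} {J : ℝ}
    (h : (conj z - z) * (J : ℂ) = 0 - (M - conj M)) : M.im = z.im * J := by
  have him := congrArg Complex.im h
  simp only [Complex.mul_im, Complex.sub_im, Complex.sub_re, Complex.conj_im, Complex.conj_re,
    Complex.ofReal_im, Complex.ofReal_re, Complex.zero_im] at him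
  linarith

theorem herglotz_property_weyl_function_general
    (b : ℝ) (hb : 0 < b)
    (Q : ℝ → Matrix (Fin 2) (Fin 2) ℂ)
    (hQreal : ∀ x ∈ Ioo 0 b, ∀ i j, (Q x i j).im = 0)
    (hQsym : ∀ x ∈ Ioo 0 b, Q x 0 1 = Q x 1 0)
    (z : ℂ)
    (Θ Φ Θ' Φ' : ℝ → Fin 2 → ℂ)
    (hΘd : ∀ x ∈ Ioo 0 b, HasDerivAt Θ (Θ' x) x)
    (hΦd : ∀ x ∈ Ioo 0 b, HasDerivAt Φ (Φ' x) x)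
    (hΘeq : ∀ x ∈ Ioo 0 b,
      Complex.I⁻¹ • (sig2C.mulVec (Θ' x)) + (Q x).mulVec (Θ x) = z • Θ x)
    (hΦeq : ∀ x ∈ Ioo 0 b,
      Complex.I⁻¹ • (sig2C.mulVec (Φ' x)) + (Q x).mulVec (Φ x) = z • Φ x)
    (M : ℂ) (Ψ : ℝ → Fin 2 → ℂ)
    (hΨ : ∀ x ∈ Ioo 0 b, Ψ x = Θ x + M • Φ x)
    (hΨint : IntegrableOn (fun x => Complex.normSq (Ψ x 0) + Complex.normSq (Ψ x 1))
      (Ioo 0 b))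
    (hΘΘ : Filter.Tendsto (fun x => Wx (fun t i => (starRingEnd ℂ) (Θ t i)) Θ x)
      (nhdsWithin 0 (Ioi 0)) (nhds 0))
    (hΦΦ : Filter.Tendsto (fun x => Wx (fun t i => (starRingEnd ℂ) (Φ t i)) Φ x)
      (nhdsWithin 0 (Ioi 0)) (nhds 0))
    (hΘΦ : Filter.Tendsto (fun x => Wx (fun t i => (starRingEnd ℂ) (Θ t i)) Φ x)
      (nhdsWithin 0 (Ioi 0)) (nhds 1))
    (hΦΘ : Filter.Tendsto (fun x => Wx (fun t i => (starRingEnd ℂ) (Φ t i)) Θ x)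
      (nhdsWithin 0 (Ioi 0)) (nhds (-1)))
    (hΨb : Filter.Tendsto (fun x => Wx (fun t i => (starRingEnd ℂ) (Ψ t i)) Ψ x)
      (nhdsWithin b (Iio b)) (nhds 0)) :
    M.im = z.im * ∫ x in Ioo 0 b, (Complex.normSq (Ψ x 0) + Complex.normSq (Ψ x 1)) ∧
    (0 < z.im → 0 ≤ M.im) := by
  have hΨd : ∀ x ∈ Ioo 0 b, HasDerivAt Ψ (Θ' x + M • Φ' x) x := fun x hx =>
    ((hΘd x hx).add ((hΦd x hx).const_smul M)).congr_of_eventuallyEq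
      (eventually_of_mem (isOpen_Ioo.mem_nhds hx) hΨ)
  have hW : ∀ x ∈ Ioo 0 b, HasDerivAt (Wx (fun t i => conj (Ψ t i)) Ψ)
      ((conj z - z) * ((Complex.normSq (Ψ x 0) + Complex.normSq (Ψ x 1) : ℝ) : ℂ)) x :=
    fun x hx => hasDerivAt_wronskian_conj_of_dirac (hQreal x hx) (hQsym x hx) (hΨd x hx)
      (hΨ x hx ▸ dirac_eq_add_smul M (hΘeq x hx) (hΦeq x hx))
  have hW0 : Tendsto (Wx (fun t i => conj (Ψ t i)) Ψ) (𝓝[>] 0) (𝓝 (M - conj M)) :=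
    tendsto_wronskian_conj_add_smul (eventually_of_mem (Ioo_mem_nhdsGT hb) hΨ) hΘΘ hΦΦ hΘΦ hΦΘ
  have hint : IntervalIntegrable
      (fun x => (conj z - z) * ((Complex.normSq (Ψ x 0) + Complex.normSq (Ψ x 1) : ℝ) : ℂ))
      volume 0 b :=
    (intervalIntegrable_iff_integrableOn_Ioo_of_le hb.le).2 (hΨint.ofReal.const_mul _)
  have hFTC := intervalIntegral.integral_eq_sub_of_hasDerivAt_of_tendsto hb hW hint hW0 hΨb
  rw [intervalIntegral.integral_of_le hb.le, integral_Ioc_eq_integral_Ioo, integral_const_mul,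
    integral_complex_ofReal] at hFTC
  have hIm := im_eq_mul_of_conj_sub_mul_ofReal hFTC
  have hnorm_nonneg : 0 ≤ ∫ x in Ioo 0 b, (Complex.normSq (Ψ x 0) + Complex.normSq (Ψ x 1)) :=
    setIntegral_nonneg measurableSet_Ioo fun x _ =>
      add_nonneg (Complex.normSq_nonneg _) (Complex.normSq_nonneg _)
  exact ⟨hIm, fun hz => hIm ▸ mul_nonneg hz.le hnorm_nonneg⟩

/-- The Herglotz property of the Weyl function in the limit circle case:
`Im M = Im z · ∫_0^b |Ψ(z,x)|² dx` for the Weyl solution `Ψ = Θ + M·Φ`,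
given the boundary Wronskian limits at `0` and `b`. In particular `Im z > 0`
implies `Im M ≥ 0`. -/
theorem herglotz_property_weyl_function
    (b : ℝ) (hb : 0 < b)
    (Q : ℝ → Matrix (Fin 2) (Fin 2) ℂ)
    (hQreal : ∀ x ∈ Ioo 0 b, ∀ i j, (Q x i j).im = 0)
    (hQsym : ∀ x ∈ Ioo 0 b, Q x 0 1 = Q x 1 0)
    (z : ℂ) (hz : z.im ≠ 0)
    (Θ Φ Θ' Φ' : ℝ → Fin 2 → ℂ)
    (hΘd : ∀ x ∈ Ioo 0 b, HasDerivAt Θ (Θ' x) x)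
    (hΦd : ∀ x ∈ Ioo 0 b, HasDerivAt Φ (Φ' x) x)
    (hΘeq : ∀ x ∈ Ioo 0 b,
      Complex.I⁻¹ • (sig2C.mulVec (Θ' x)) + (Q x).mulVec (Θ x) = z • Θ x)
    (hΦeq : ∀ x ∈ Ioo 0 b,
      Complex.I⁻¹ • (sig2C.mulVec (Φ' x)) + (Q x).mulVec (Φ x) = z • Φ x)
    (M : ℂ) (Ψ : ℝ → Fin 2 → ℂ)
    (hΨ : ∀ x ∈ Ioo 0 b, Ψ x = Θ x + M • Φ x)
    (hΨint : IntegrableOn (fun x => Complex.normSq (Ψ x 0) + Complex.normSq (Ψ x 1))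
      (Ioo 0 b))
    (hΘΘ : Filter.Tendsto (fun x => Wx (fun t i => (starRingEnd ℂ) (Θ t i)) Θ x)
      (nhdsWithin 0 (Ioi 0)) (nhds 0))
    (hΦΦ : Filter.Tendsto (fun x => Wx (fun t i => (starRingEnd ℂ) (Φ t i)) Φ x)
      (nhdsWithin 0 (Ioi 0)) (nhds 0))
    (hΘΦ : Filter.Tendsto (fun x => Wx (fun t i => (starRingEnd ℂ) (Θ t i)) Φ x)
      (nhdsWithin 0 (Ioi 0)) (nhds 1))
    (hΦΘ : Filter.Tendsto (fun x => Wx (fun t i => (starRingEnd ℂ) (Φ t i)) Θ x)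
      (nhdsWithin 0 (Ioi 0)) (nhds (-1)))
    (hΨb : Filter.Tendsto (fun x => Wx (fun t i => (starRingEnd ℂ) (Ψ t i)) Ψ x)
      (nhdsWithin b (Iio b)) (nhds 0)) :
    M.im = z.im * ∫ x in Ioo 0 b, (Complex.normSq (Ψ x 0) + Complex.normSq (Ψ x 1)) ∧
    (0 < z.im → 0 ≤ M.im) :=
  herglotz_property_weyl_function_general b hb Q hQreal hQsym z Θ Φ Θ' Φ' hΘd hΦd hΘeq hΦeq M Ψ hΨ
    hΨint hΘΘ hΦΦ hΘΦ hΦΘ hΨb
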